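/- arXiv:1901.06336 — 3 statements merged into one kernel-verified Lean document; each statement's English description precedes it below -/
import Mathlib

section
/- Let F be a field, B_0 a subgroup of the multiplicative group Fˣ, and r, l ≥ 1. For each j ∈ {1,…,r} let σ_j ∈ Fˣ, with σ_1 B_0, …, σ_r B_0 pairwise distinct cosets of B_0, and let d_{j,b} ∈ B_0 for b ∈ {1,…,l}. Then the rl × rl matrix over F, with rows indexed by pairs (t, b') for t ∈ {0,…,r−1}, b' ∈ {1,…,l} and columns indexed by pairs (j, b) for j ∈ {1,…,r}, b ∈ {1,…,l}, whose entry at ((t,b'),(j,b)) equals (σ_j d_{j,b})^t if b' = b and equals 0 otherwise, is invertible. -/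
open scoped Pointwise

/-!
Grouping rows and columns by the index `b`, the matrix is block diagonal, the `b`-th block being
the transposed Vandermonde matrix in the nodes `σ_j d_{j,b}`. Since `σ_j d_{j,b}` lies in the coset
`σ_j B₀`, nodes with different `j` lie in different cosets, so they are distinct and every block
is invertible.
-/

namespace Matrix

variable {R : Type*} [CommRing R]

theorem isUnit_blockDiagonal_iff {n o : Type*} [Fintype n] [DecidableEq n] [Fintype o]
    [DecidableEq o] (M : o → Matrix n n R) :
    IsUnit (blockDiagonal M) ↔ ∀ b, IsUnit (M b) := by
  simp only [isUnit_iff_isUnit_det, det_blockDiagonal, IsUnit.prod_iff, Finset.mem_univ,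
    true_implies]

theorem isUnit_vandermonde_transpose {K : Type*} [Field K] {n : ℕ} {v : Fin n → K}
    (hv : Function.Injective v) : IsUnit (vandermonde v)ᵀ := by
  rw [isUnit_iff_isUnit_det, det_transpose, isUnit_iff_ne_zero]
  exact det_vandermonde_ne_zero_iff.mpr hv

theorem of_ite_pow_eq_blockDiagonal {r l : ℕ} (v : Fin r → Fin l → R) :
    of (fun (p q : Fin r × Fin l) => if p.2 = q.2 then v q.1 q.2 ^ (p.1 : ℕ) else 0) =
      blockDiagonal (fun b => (vandermonde (fun j => v j b))ᵀ) := by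
  ext ⟨t, b'⟩ ⟨j, b⟩
  simp only [of_apply, blockDiagonal_apply, transpose_apply, vandermonde_apply]
  split_ifs with h
  · subst h; rfl
  · rfl

end Matrix

theorem Subgroup.mul_injective_of_smul_coe_injective {G : Type*} [Group G] {H : Subgroup G}
    {ι : Type*} {g h : ι → G} (hg : Function.Injective fun i => g i • (H : Set G))
    (hh : ∀ i, h i ∈ H) : Function.Injective fun i => g i * h i := by
  intro i i' hii'
  apply hg
  have hquot : (g i)⁻¹ * g i' = h i * (h i')⁻¹ := by
    rw [inv_mul_eq_iff_eq_mul, ← mul_assoc, eq_mul_inv_iff_mul_eq]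
    exact hii'.symm
  simp only [leftCoset_eq_iff, hquot]
  exact H.mul_mem (hh i) (H.inv_mem (hh i'))

theorem emscr_block_vandermonde_isUnit_general {F : Type*} [Field F] (B₀ : Subgroup Fˣ)
    (r l : ℕ)
    (σ : Fin r → Fˣ) (hσ : ∀ j j' : Fin r, j ≠ j' → σ j • (B₀ : Set Fˣ) ≠ σ j' • (B₀ : Set Fˣ))
    (d : Fin r → Fin l → Fˣ) (hd : ∀ j b, d j b ∈ B₀) :
    IsUnit (Matrix.of (fun (p : Fin r × Fin l) (q : Fin r × Fin l) =>
      if p.2 = q.2 then (((σ q.1 * d q.1 q.2 : Fˣ) : F)) ^ (p.1 : ℕ) else (0 : F))) := by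
  rw [Matrix.of_ite_pow_eq_blockDiagonal (fun j b => ((σ j * d j b : Fˣ) : F)),
    Matrix.isUnit_blockDiagonal_iff]
  intro b
  have hcosets : Function.Injective fun j => σ j • (B₀ : Set Fˣ) :=
    fun j j' h => by_contra fun hne => hσ j j' hne h
  exact Matrix.isUnit_vandermonde_transpose <| Units.val_injective.comp <|
    Subgroup.mul_injective_of_smul_coe_injective hcosets (fun j => hd j b)

/-- Theorem 1 (the ε-MSCR code is vector MDS): if `σ_1, …, σ_r ∈ Fˣ` lie in pairwise distinct
cosets of a subgroup `B₀ ≤ Fˣ` and all the diagonal entries `d_{j,b}` belong to `B₀`, then the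
`rl × rl` matrix with entry `(σ_j d_{j,b})^t` at `((t,b'),(j,b))` when `b' = b` and `0` otherwise
is invertible. -/
theorem emscr_block_vandermonde_isUnit {F : Type*} [Field F] (B₀ : Subgroup Fˣ)
    (r l : ℕ) (hr : 1 ≤ r) (hl : 1 ≤ l)
    (σ : Fin r → Fˣ) (hσ : ∀ j j' : Fin r, j ≠ j' → σ j • (B₀ : Set Fˣ) ≠ σ j' • (B₀ : Set Fˣ))
    (d : Fin r → Fin l → Fˣ) (hd : ∀ j b, d j b ∈ B₀) :
    IsUnit (Matrix.of (fun (p : Fin r × Fin l) (q : Fin r × Fin l) =>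
      if p.2 = q.2 then (((σ q.1 * d q.1 q.2 : Fˣ) : F)) ^ (p.1 : ℕ) else (0 : F))) :=
  emscr_block_vandermonde_isUnit_general B₀ r l σ hσ d hd
end

section
/- Let F be a finite alphabet, N and D natural numbers with D ≤ N, l a positive real number, and let a_1, a_2, a_3 : {1,…,N} → F be words with a_3(j) ≠ a_1(j) whenever a_1(j) = a_2(j). Let 𝒫 be a finite index set and for each i ∈ 𝒫 let a_i : {1,…,N} → F be a word whose Hamming distance to a_1 is at least D and whose Hamming distance to a_2 is at least D. Then |{j : a_1(j) ≠ a_2(j)}|·(2l/3) + |{j : a_1(j) = a_2(j)}|·l + Σ_{i∈𝒫} ( |{j : a_1(j) ≠ a_2(j), a_i(j) = a_1(j)}|·l + |{j : a_1(j) ≠ a_2(j), a_i(j) = a_2(j)}|·l + |{j : a_1(j) ≠ a_2(j), a_i(j) ≠ a_1(j), a_i(j) ≠ a_2(j)}|·(2l/3) + |{j : a_1(j) = a_2(j), a_i(j) = a_1(j)}|·l + |{j : a_1(j) = a_2(j), a_i(j) = a_3(j)}|·(2l/3) + |{j : a_1(j) = a_2(j), a_i(j) ≠ a_1(j), a_i(j)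 ≠ a_3(j)}|·(2l/3) ) ≤ N·l + |𝒫|·(4Nl/3 − 2Dl/3). -/
/-!
Each position `j` contributes to the bandwidth drawn from helper `i` either `l` or `2l/3`, and
it contributes `l` only where `a i` agrees with `a1`, or with `a2 ≠ a1`; the condition on `a3`
makes the two cases `a i j = a1 j` and `a i j = a3 j` exclusive when `a1 j = a2 j`. Hence helper
`i` costs at most `2Nl/3 + (l/3)·(#{a i = a1} + #{a i = a2})`, and each of these agreement counts
is `N` minus a Hamming distance, so at most `N - D`. The two failed nodes cost at most `N·l`.
-/

open Finset

theorem helper_position_cost_le {β : Type*} [DecidableEq β] {b1 b2 b3 x : β}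
    (h3 : b1 = b2 → b3 ≠ b1) {l : ℝ} (hl : 0 ≤ l) :
    ((if b1 ≠ b2 ∧ x = b1 then 1 else 0) * l + (if b1 ≠ b2 ∧ x = b2 then 1 else 0) * l +
      (if b1 ≠ b2 ∧ x ≠ b1 ∧ x ≠ b2 then 1 else 0) * (2 * l / 3) +
      (if b1 = b2 ∧ x = b1 then 1 else 0) * l +
      (if b1 = b2 ∧ x = b3 then 1 else 0) * (2 * l / 3) +
      (if b1 = b2 ∧ x ≠ b1 ∧ x ≠ b3 then 1 else 0) * (2 * l / 3) : ℝ) ≤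
      2 * l / 3 + l / 3 * ((if x = b1 then 1 else 0) + (if x = b2 then 1 else 0)) := by
  by_cases h12 : b1 = b2
  · subst h12
    have h31 := h3 rfl
    by_cases hx1 : x = b1
    · subst hx1
      simp [Ne.symm h31]
      linarith
    · by_cases hx3 : x = b3 <;> simp [hx1, hx3, h31]
  · by_cases hx1 : x = b1 <;> by_cases hx2 : x = b2 <;> simp_all <;> linarith

section HammingAgreement

variable {ι β : Type*} [Fintype ι] [DecidableEq β]

theorem card_filter_eq_sub_hammingDist (x y : ι → β) :
    (#{j | x j = y j} : ℝ) = Fintype.card ι - hammingDist x y := by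
  have h := card_filter_add_card_filter_not (s := univ) (p := fun j => x j = y j)
  rw [card_univ] at h
  rw [hammingDist, ← h]
  push_cast
  ring

theorem failed_nodes_cost_le (a1 a2 : ι → β) {l : ℝ} (hl : 0 ≤ l) :
    (#{j | a1 j ≠ a2 j} : ℝ) * (2 * l / 3) + (#{j | a1 j = a2 j} : ℝ) * l ≤
      Fintype.card ι * l := by
  rw [card_filter_eq_sub_hammingDist, ← hammingDist]
  nlinarith [(hammingDist a1 a2).cast_nonneg (α := ℝ)]

theorem helper_cost_le (x a1 a2 a3 : ι → β) (h3 : ∀ j, a1 j = a2 j → a3 j ≠ a1 j)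
    {l : ℝ} (hl : 0 ≤ l) {D : ℕ} (hd1 : D ≤ hammingDist x a1) (hd2 : D ≤ hammingDist x a2) :
    (#{j | a1 j ≠ a2 j ∧ x j = a1 j} : ℝ) * l + (#{j | a1 j ≠ a2 j ∧ x j = a2 j} : ℝ) * l +
      (#{j | a1 j ≠ a2 j ∧ x j ≠ a1 j ∧ x j ≠ a2 j} : ℝ) * (2 * l / 3) +
      (#{j | a1 j = a2 j ∧ x j = a1 j} : ℝ) * l +
      (#{j | a1 j = a2 j ∧ x j = a3 j} : ℝ) * (2 * l / 3) +
      (#{j | a1 j = a2 j ∧ x j ≠ a1 j ∧ x j ≠ a3 j} : ℝ) * (2 * l / 3) ≤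
      4 * Fintype.card ι * l / 3 - 2 * D * l / 3 := by
  have hsum := sum_le_sum fun j (_ : j ∈ univ) => helper_position_cost_le (x := x j) (h3 j) hl
  simp only [sum_add_distrib, ← sum_mul, ← mul_sum, ← natCast_card_filter, sum_const, card_univ,
    nsmul_eq_mul] at hsum
  rw [card_filter_eq_sub_hammingDist, card_filter_eq_sub_hammingDist] at hsum
  have hD : (2 * D : ℝ) ≤ hammingDist x a1 + hammingDist x a2 := by
    rw [two_mul]
    exact_mod_cast add_le_add hd1 hd2
  nlinarith

end HammingAgreement

theorem repair_bandwidth_bound_general {F : Type*} [DecidableEq F] {ι : Type*}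
    (N D : ℕ) (l : ℝ) (hl : 0 < l)
    (a1 a2 a3 : Fin N → F) (h3 : ∀ j, a1 j = a2 j → a3 j ≠ a1 j)
    (P : Finset ι) (a : ι → Fin N → F)
    (hd1 : ∀ i ∈ P, D ≤ hammingDist (a i) a1)
    (hd2 : ∀ i ∈ P, D ≤ hammingDist (a i) a2) :
    ((univ.filter (fun j : Fin N => a1 j ≠ a2 j)).card : ℝ) * (2 * l / 3) +
      ((univ.filter (fun j : Fin N => a1 j = a2 j)).card : ℝ) * l +
      ∑ i ∈ P,
        (((univ.filter (fun j : Fin N => a1 j ≠ a2 j ∧ a i j = a1 j)).card : ℝ) * l +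
          ((univ.filter (fun j : Fin N => a1 j ≠ a2 j ∧ a i j = a2 j)).card : ℝ) * l +
          ((univ.filter (fun j : Fin N =>
              a1 j ≠ a2 j ∧ a i j ≠ a1 j ∧ a i j ≠ a2 j)).card : ℝ) * (2 * l / 3) +
          ((univ.filter (fun j : Fin N => a1 j = a2 j ∧ a i j = a1 j)).card : ℝ) * l +
          ((univ.filter (fun j : Fin N => a1 j = a2 j ∧ a i j = a3 j)).card : ℝ) * (2 * l / 3) +
          ((univ.filter (fun j : Fin N =>
              a1 j = a2 j ∧ a i j ≠ a1 j ∧ a i j ≠ a3 j)).card : ℝ) * (2 * l / 3)) ≤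
      (N : ℝ) * l + (P.card : ℝ) * (4 * N * l / 3 - 2 * D * l / 3) := by
  calc _ ≤ Fintype.card (Fin N) * l +
        ∑ _i ∈ P, (4 * Fintype.card (Fin N) * l / 3 - 2 * D * l / 3) :=
        add_le_add (failed_nodes_cost_le a1 a2 hl.le)
          (sum_le_sum fun i hi => helper_cost_le (a i) a1 a2 a3 h3 hl.le (hd1 i hi) (hd2 i hi))
    _ = _ := by rw [sum_const, nsmul_eq_mul, Fintype.card_fin]

/-- The chain of inequalities (26)–(31): the upper bound on the total repair bandwidth of the
ε-MSCR code is at most `N·l + |𝒫|·(4Nl/3 − 2Dl/3)`. -/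
theorem repair_bandwidth_bound {F : Type*} [Fintype F] [DecidableEq F] {ι : Type*}
    (N D : ℕ) (hDN : D ≤ N) (l : ℝ) (hl : 0 < l)
    (a1 a2 a3 : Fin N → F) (h3 : ∀ j, a1 j = a2 j → a3 j ≠ a1 j)
    (P : Finset ι) (a : ι → Fin N → F)
    (hd1 : ∀ i ∈ P, D ≤ hammingDist (a i) a1)
    (hd2 : ∀ i ∈ P, D ≤ hammingDist (a i) a2) :
    ((univ.filter (fun j : Fin N => a1 j ≠ a2 j)).card : ℝ) * (2 * l / 3) +
      ((univ.filter (fun j : Fin N => a1 j = a2 j)).card : ℝ) * l +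
      ∑ i ∈ P,
        (((univ.filter (fun j : Fin N => a1 j ≠ a2 j ∧ a i j = a1 j)).card : ℝ) * l +
          ((univ.filter (fun j : Fin N => a1 j ≠ a2 j ∧ a i j = a2 j)).card : ℝ) * l +
          ((univ.filter (fun j : Fin N =>
              a1 j ≠ a2 j ∧ a i j ≠ a1 j ∧ a i j ≠ a2 j)).card : ℝ) * (2 * l / 3) +
          ((univ.filter (fun j : Fin N => a1 j = a2 j ∧ a i j = a1 j)).card : ℝ) * l +
          ((univ.filter (fun j : Fin N => a1 j = a2 j ∧ a i j = a3 j)).card : ℝ) * (2 * l / 3) +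
          ((univ.filter (fun j : Fin N =>
              a1 j = a2 j ∧ a i j ≠ a1 j ∧ a i j ≠ a3 j)).card : ℝ) * (2 * l / 3)) ≤
      (N : ℝ) * l + (P.card : ℝ) * (4 * N * l / 3 - 2 * D * l / 3) :=
  repair_bandwidth_bound_general N D l hl a1 a2 a3 h3 P a hd1 hd2
end

section
/- Let N, l, r be positive real numbers and δ, P, M real numbers with P ≥ 0, δ ≤ 2, P ≤ M − 2, and P − (M − r) + 2 > 0. Then N·l + P·(4Nl/3 − 2δNl/3) ≤ ( (r/(P+1))·(1/2 + (2−δ)·P/3) ) · ( 2(P+1)·N·l / (P − (M − r) + 2) ). -/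
/-! Both sides are multiples of `(1/2 + (2 - δ)P/3) · 2Nl`, a nonnegative quantity: the left side
equals it, the right side is it times `r / (P - (M - r) + 2)`, and `P ≤ M - 2` makes that
ratio at least `1`. -/

theorem repair_bandwidth_le_factor_times_optimal_general (N l r δ P M : ℝ)
    (hN : 0 < N) (hl : 0 < l) (hP : 0 ≤ P) (hδ : δ ≤ 2)
    (hPM : P ≤ M - 2) (hpos : P - (M - r) + 2 > 0) :
    N * l + P * (4 * N * l / 3 - 2 * δ * N * l / 3) ≤
      ((r / (P + 1)) * (1 / 2 + (2 - δ) * P / 3)) *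
        (2 * (P + 1) * N * l / (P - (M - r) + 2)) := by
  have hfactor : 0 ≤ 1 / 2 + (2 - δ) * P / 3 := by
    have : 0 ≤ (2 - δ) * P := mul_nonneg (sub_nonneg.mpr hδ) hP
    linarith
  have hratio : 1 ≤ r / (P - (M - r) + 2) := (one_le_div hpos).mpr (by linarith)
  have hP1 : P + 1 ≠ 0 := by positivity
  calc N * l + P * (4 * N * l / 3 - 2 * δ * N * l / 3)
        = (1 / 2 + (2 - δ) * P / 3) * (2 * N * l) := by ring
    _ ≤ (1 / 2 + (2 - δ) * P / 3) * (2 * N * l) * (r / (P - (M - r) + 2)) :=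
        le_mul_of_one_le_right (mul_nonneg hfactor (by positivity)) hratio
    _ = (r / (P + 1)) * (1 / 2 + (2 - δ) * P / 3) * (2 * (P + 1) * N * l / (P - (M - r) + 2)) := by
        field_simp

/-- The arithmetic core of the repair bandwidth theorem: the upper bound on the total repair
bandwidth is at most `(1 + ε₂)` times the optimal cooperative repair bandwidth. -/
theorem repair_bandwidth_le_factor_times_optimal (N l r δ P M : ℝ)
    (hN : 0 < N) (hl : 0 < l) (hr : 0 < r) (hP : 0 ≤ P) (hδ : δ ≤ 2)
    (hPM : P ≤ M - 2) (hpos : P - (M - r) + 2 > 0) :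
    N * l + P * (4 * N * l / 3 - 2 * δ * N * l / 3) ≤
      ((r / (P + 1)) * (1 / 2 + (2 - δ) * P / 3)) *
        (2 * (P + 1) * N * l / (P - (M - r) + 2)) :=
  repair_bandwidth_le_factor_times_optimal_general N l r δ P M hN hl hP hδ hPM hpos
end
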